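/- arXiv:1009.3318 — 6 statements merged into one kernel-verified Lean document; each statement's English description precedes it below -/
import Mathlib

section
/- Let G(p) be a framework on n nodes in general position in ℝ^r admitting a stress matrix S of rank n−r−1. Then there exists a Gale matrix Ẑ of p such that Ẑ_{ij} = 0 for all j = 1,...,r̄ and all i ∈ N̄(j+r+1), where N̄(k) is the set of vertices non-adjacent to k. Concretely, Ẑ can be taken to consist of the last r̄ columns of S. -/
open Matrix

/-- The (r+1)×n matrix whose j-th column is (p^j, 1). -/
def calA {n r : ℕ} (p : Fin n → Fin r → ℝ) : Matrix (Fin (r + 1)) (Fin n) ℝ :=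
  fun i j => if h : (i : ℕ) < r then p j ⟨i, h⟩ else 1

/-- `Z` is a Gale matrix of the configuration `p`. -/
def IsGaleMatrix {n r : ℕ} (p : Fin n → Fin r → ℝ)
    (Z : Matrix (Fin n) (Fin (n - r - 1)) ℝ) : Prop :=
  LinearIndependent ℝ (fun j : Fin (n - r - 1) => (fun i => Z i j)) ∧
  (∀ j : Fin (n - r - 1), calA p *ᵥ (fun i => Z i j) = 0) ∧
  (∀ x : Fin n → ℝ, calA p *ᵥ x = 0 →
    ∃ c : Fin (n - r - 1) → ℝ, x = ∑ j, c j • (fun i => Z i j))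

/-- No subset of the points of cardinality r+1 is affinely dependent. -/
def InGeneralPosition {n r : ℕ} (p : Fin n → Fin r → ℝ) : Prop :=
  ∀ s : Finset (Fin n), s.card = r + 1 →
    AffineIndependent ℝ (fun i : {x // x ∈ s} => p i)

/-- `S` is a stress matrix of the framework `G(p)`. -/
def IsStressMatrix {n r : ℕ} (G : SimpleGraph (Fin n)) (p : Fin n → Fin r → ℝ)
    (S : Matrix (Fin n) (Fin n) ℝ) : Prop :=
  S.IsSymm ∧ (∀ i j, i ≠ j → ¬ G.Adj i j → S i j = 0) ∧ calA p * S = 0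

/-- The vertex indexed `j + r + 1` (1-based), i.e. one of the last `n - r - 1` vertices. -/
def vertOf (n r : ℕ) (j : Fin (n - r - 1)) : Fin n :=
  ⟨r + 1 + j, by have := j.isLt; omega⟩

/-!
Since `S` is symmetric, `𝒜 S = 0` also gives `S 𝒜ᵀ = 0`: every vector `𝒜ᵀ y` is a linear
relation among the columns of `S`. General position makes the leading `(r+1)×(r+1)` block of
`𝒜` invertible, so `y` can be chosen with `𝒜ᵀ y` equal to any unit vector on the first `r+1`
indices; hence each of the first `r+1` columns of `S` is a combination of the last `r̄`. These
`r̄` columns therefore span the column space of `S`, of dimension `rank S = r̄`, so they are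
linearly independent. They lie in `ker 𝒜`, which also has dimension `r̄`, so they form a basis
of it, i.e. a Gale matrix.
-/

namespace Matrix

variable {K m ι μ : Type*} [Field K]

theorem col_mem_span_image_compl_of_mulVec_eq_zero [Fintype ι] {M : Matrix m ι K} {v : ι → K}
    (hv : M *ᵥ v = 0) {T : Set ι} {t : ι} (ht : v t = 1) (hT : ∀ k ∈ T, k ≠ t → v k = 0) :
    M.col t ∈ Submodule.span K (M.col '' Tᶜ) := by
  classical
  have hsum : ∑ k, v k • M.col k = 0 := by
    simpa only [mulVec_eq_sum, op_smul_eq_smul, col] using hv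
  rw [← Finset.add_sum_erase _ _ (Finset.mem_univ t), ht, one_smul,
    add_eq_zero_iff_eq_neg] at hsum
  rw [hsum]
  refine neg_mem (Submodule.sum_mem _ fun k hk => ?_)
  by_cases hkT : k ∈ T
  · rw [hT k hkT (Finset.ne_of_mem_erase hk), zero_smul]
    exact zero_mem _
  · exact Submodule.smul_mem _ _ (Submodule.subset_span ⟨k, hkT, rfl⟩)

variable [Fintype m] [DecidableEq m]

theorem exists_transpose_mulVec_comp_eq_single {A : Matrix m ι K} {e : m → ι}
    (he : IsUnit (A.submatrix id e)) (t : m) :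
    ∃ y, (Aᵀ *ᵥ y) ∘ e = Pi.single t 1 :=
  mulVec_surjective_iff_isUnit.mpr ((isUnit_transpose _).mpr he) _

theorem span_range_col_le_span_image_compl [Fintype ι] {S : Matrix ι ι K} {A : Matrix m ι K}
    (hSA : S * Aᵀ = 0) {e : m → ι} (he : IsUnit (A.submatrix id e)) :
    Submodule.span K (Set.range S.col) ≤ Submodule.span K (S.col '' (Set.range e)ᶜ) := by
  rw [Submodule.span_le]
  rintro _ ⟨k, rfl⟩
  by_cases hk : k ∈ Set.range e
  · obtain ⟨t, rfl⟩ := hk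
    obtain ⟨y, hy⟩ := exists_transpose_mulVec_comp_eq_single he t
    have hy' (s : m) : (Aᵀ *ᵥ y) (e s) = (Pi.single t 1 : m → K) s := congrFun hy s
    refine col_mem_span_image_compl_of_mulVec_eq_zero (v := Aᵀ *ᵥ y) ?_ (by simp [hy']) ?_
    · rw [mulVec_mulVec, hSA, zero_mulVec]
    · rintro _ ⟨s, rfl⟩ hst
      rw [hy', Pi.single_eq_of_ne (ne_of_apply_ne e hst)]
  · exact Submodule.subset_span ⟨k, hk, rfl⟩

theorem linearIndependent_col_comp [Fintype ι] [Fintype μ] {S : Matrix ι ι K}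
    {A : Matrix m ι K} (hSA : S * Aᵀ = 0) {e : m → ι} (he : IsUnit (A.submatrix id e))
    {f : μ → ι} (hf : (Set.range e)ᶜ ⊆ Set.range f) (hrank : S.rank = Fintype.card μ) :
    LinearIndependent K (S.col ∘ f) := by
  have hcompl : S.col '' (Set.range e)ᶜ ⊆ Set.range (S.col ∘ f) := by
    rintro _ ⟨k, hk, rfl⟩
    obtain ⟨j, rfl⟩ := hf hk
    exact ⟨j, rfl⟩
  have hspan : Submodule.span K (Set.range (S.col ∘ f)) = Submodule.span K (Set.range S.col) :=
    le_antisymm (Submodule.span_mono (Set.range_comp_subset_range f S.col))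
      ((span_range_col_le_span_image_compl hSA he).trans (Submodule.span_mono hcompl))
  rw [linearIndependent_iff_card_eq_finrank_span, Set.finrank, hspan,
    ← rank_eq_finrank_span_cols, hrank]

theorem rank_eq_card_of_isUnit_submatrix [Fintype ι] {A : Matrix m ι K} {e : m → ι}
    (he : IsUnit (A.submatrix id e)) : A.rank = Fintype.card m :=
  le_antisymm (rank_le_card_height A) (rank_of_isUnit _ he ▸ rank_submatrix_le A id e)

theorem finrank_ker_mulVecLin_of_isUnit_submatrix [Fintype ι] {A : Matrix m ι K}
    {e : m → ι} (he : IsUnit (A.submatrix id e)) :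
    Module.finrank K (LinearMap.ker A.mulVecLin) = Fintype.card ι - Fintype.card m := by
  have := LinearMap.finrank_range_add_finrank_ker A.mulVecLin
  rw [← rank, rank_eq_card_of_isUnit_submatrix he, Module.finrank_fintype_fun_eq_card] at this
  omega

end Matrix

theorem isUnit_calA_of_affineIndependent {r : ℕ} {q : Fin (r + 1) → Fin r → ℝ}
    (hq : AffineIndependent ℝ q) : IsUnit (calA q) := by
  refine mulVec_injective_iff_isUnit.mp fun x y hxy => ?_
  rw [← sub_eq_zero] at hxy ⊢
  rw [← mulVec_sub] at hxy
  set w := x - y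
  have hrow : ∀ i, ∑ k, calA q i k * w k = 0 := fun i => congrFun hxy i
  have hw : ∑ k, w k = 0 := by simpa [calA] using hrow (Fin.last r)
  have hwq : ∑ k, w k • q k = 0 := by
    ext i
    simpa [calA, mul_comm] using hrow i.castSucc
  exact funext fun k => hq.eq_zero_of_sum_eq_zero hw hwq k (Finset.mem_univ k)

theorem InGeneralPosition.affineIndependent_comp {n r : ℕ} {p : Fin n → Fin r → ℝ}
    (hp : InGeneralPosition p) {e : Fin (r + 1) → Fin n} (he : Function.Injective e) :
    AffineIndependent ℝ (p ∘ e) := by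
  exact (hp (Finset.univ.map ⟨e, he⟩) (by simp)).comp_embedding
    ⟨fun i => ⟨e i, Finset.mem_map_of_mem _ (Finset.mem_univ i)⟩,
      fun _ _ h => he (congrArg Subtype.val h)⟩

theorem isGaleMatrix_of_linearIndependent {n r : ℕ} {p : Fin n → Fin r → ℝ}
    {Z : Matrix (Fin n) (Fin (n - r - 1)) ℝ} (hZ : LinearIndependent ℝ Z.col)
    (hker : ∀ j, calA p *ᵥ Z.col j = 0)
    (hdim : Module.finrank ℝ (LinearMap.ker (calA p).mulVecLin) = n - r - 1) :
    IsGaleMatrix p Z := by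
  refine ⟨hZ, hker, fun x hx => ?_⟩
  have hspan : Submodule.span ℝ (Set.range Z.col) = LinearMap.ker (calA p).mulVecLin := by
    refine Submodule.eq_of_le_of_finrank_eq ?_ (by rw [finrank_span_eq_card hZ, hdim]; simp)
    rw [Submodule.span_le]
    rintro _ ⟨j, rfl⟩
    exact hker j
  obtain ⟨c, hc⟩ := (Submodule.mem_span_range_iff_exists_fun ℝ).mp
    (hspan.ge (LinearMap.mem_ker.mpr hx))
  exact ⟨c, hc.symm⟩

theorem exists_gale_with_zero_pattern {n r : ℕ} (hn : r + 2 ≤ n)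
    (G : SimpleGraph (Fin n)) (p : Fin n → Fin r → ℝ) (hgen : InGeneralPosition p)
    (S : Matrix (Fin n) (Fin n) ℝ) (hS : IsStressMatrix G p S)
    (hrank : S.rank = n - r - 1) :
    ∃ Zh : Matrix (Fin n) (Fin (n - r - 1)) ℝ,
      IsGaleMatrix p Zh ∧
      (∀ (j : Fin (n - r - 1)) (i : Fin n),
        i ≠ vertOf n r j → ¬ G.Adj i (vertOf n r j) → Zh i j = 0) ∧
      (∀ (i : Fin n) (j : Fin (n - r - 1)), Zh i j = S i (vertOf n r j)) := by
  obtain ⟨hsymm, hzero, hAS⟩ := hS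
  let lead : Fin (r + 1) → Fin n := Fin.castLE (by omega)
  have hunit : IsUnit ((calA p).submatrix id lead) :=
    isUnit_calA_of_affineIndependent (hgen.affineIndependent_comp (Fin.castLE_injective _))
  have hSA : S * (calA p)ᵀ = 0 := by
    rw [← hsymm.eq, ← transpose_mul, hAS, transpose_zero]
  have hcover : (Set.range lead)ᶜ ⊆ Set.range (vertOf n r) := fun k hk => by
    have hk' : r + 1 ≤ k.val := not_lt.mp fun h => hk ⟨⟨k, h⟩, rfl⟩
    exact ⟨⟨k - (r + 1), by omega⟩, Fin.ext (by simp [vertOf]; omega)⟩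
  refine ⟨S.submatrix id (vertOf n r), isGaleMatrix_of_linearIndependent ?_ ?_ ?_,
    fun j i => hzero i _, fun _ _ => rfl⟩
  · exact linearIndependent_col_comp hSA hunit hcover (by rw [hrank, Fintype.card_fin])
  · intro j
    change calA p *ᵥ S.col (vertOf n r j) = 0
    rw [← mulVec_single_one, mulVec_mulVec, hAS, zero_mulVec]
  · rw [finrank_ker_mulVecLin_of_isUnit_submatrix hunit, Fintype.card_fin, Fintype.card_fin]
    omega
end

section
/- Let G(p) be a framework on n nodes in general position in ℝ^r admitting a positive semidefinite stress matrix of rank n−r−1. Then every vertex of G has degree at least r+1; equivalently |N̄(i)| ≤ n−r−2 for every vertex i. -/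
open Matrix Finset

/-! Since `calA p * S = 0` and `S` is symmetric, the column space of `(calA p)ᵀ` lies in
`ker S`. By general position it has dimension `r + 1`, which by the rank hypothesis is also the
dimension of `ker S`, so the two coincide. If `i` had at most `r` neighbours, its closed
neighbourhood would be affinely independent, and the equilibrium condition at `i` (the `i`-th
column of `calA p * S = 0`) would force the `i`-th column of `S` to vanish. Then
`Pi.single i 1 ∈ ker S` would be `(calA p)ᵀ *ᵥ c` for some `c`, making `c` orthogonal to the
`r + 1 ≤ n - 1` lifted points other than `p i`; these span, so `c = 0`, which is absurd. -/

theorem AffineIndependent.linearIndependent_snoc_one {k ι : Type*} [Ring k] {r : ℕ}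
    {q : ι → Fin r → k} (hq : AffineIndependent k q) :
    LinearIndependent k (fun i => (Fin.snoc (q i) 1 : Fin (r + 1) → k)) := by
  refine linearIndependent_iff'.2 fun s w hw => hq.eq_zero_of_sum_eq_zero ?_ ?_
  · simpa using congrFun hw (Fin.last r)
  · funext j
    simpa using congrFun hw j.castSucc

theorem Matrix.eq_zero_of_mulVec_eq_zero_of_linearIndepOn {m n R : Type*} [Fintype n]
    [CommRing R] {M : Matrix m n R} {s : Finset n} (hM : LinearIndepOn R M.col s) {v : n → R}
    (hv : M *ᵥ v = 0) (hvs : ∀ j ∉ s, v j = 0) : v = 0 := by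
  have hsum : ∑ j ∈ s, v j • M.col j = 0 := by
    rw [sum_subset (subset_univ s) fun j _ hj => by rw [hvs j hj, zero_smul], ← hv,
      mulVec_eq_sum]
    simp only [op_smul_eq_smul]
    rfl
  funext j
  by_cases hj : j ∈ s
  · exact linearIndepOn_finset_iff.1 hM v hsum j hj
  · exact hvs j hj

theorem Matrix.ker_mulVecLin_eq_range_transpose {m n K : Type*} [Fintype m] [Fintype n]
    [DecidableEq n] [Field K] {A : Matrix m n K} {S : Matrix n n K} (hS : S.IsSymm)
    (hAS : A * S = 0) (hrank : A.rank + S.rank = Fintype.card n) :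
    LinearMap.ker S.mulVecLin = LinearMap.range Aᵀ.mulVecLin := by
  have hle : LinearMap.range Aᵀ.mulVecLin ≤ LinearMap.ker S.mulVecLin := by
    rintro _ ⟨x, rfl⟩
    rw [LinearMap.mem_ker, mulVecLin_apply, mulVecLin_apply, mulVec_mulVec, ← hS.eq,
      ← transpose_mul, hAS, transpose_zero, zero_mulVec]
  refine (Submodule.eq_of_le_of_finrank_le hle ?_).symm
  have hS' := LinearMap.finrank_range_add_finrank_ker S.mulVecLin
  rw [← rank_transpose] at hrank
  simp only [Module.finrank_fintype_fun_eq_card] at hS'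
  unfold Matrix.rank at hrank
  omega

theorem SimpleGraph.card_filter_ne_not_adj {V : Type*} [Fintype V] [DecidableEq V]
    (G : SimpleGraph V) [DecidableRel G.Adj] (v : V) :
    (univ.filter fun w => w ≠ v ∧ ¬G.Adj v w).card = Fintype.card V - 1 - G.degree v := by
  rw [← degree_compl, ← card_neighborFinset_eq_degree]
  congr 1
  ext w
  simp [eq_comm]

theorem col_calA {n r : ℕ} (p : Fin n → Fin r → ℝ) :
    (calA p).col = fun j => (Fin.snoc (p j) 1 : Fin (r + 1) → ℝ) := by
  ext j k
  induction k using Fin.lastCases <;> simp [calA, Fin.snoc]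

namespace InGeneralPosition

variable {n r : ℕ} {p : Fin n → Fin r → ℝ} {s : Finset (Fin n)}

theorem linearIndepOn_calA_col (hp : InGeneralPosition p) (hs : s.card = r + 1) :
    LinearIndepOn ℝ (calA p).col s := by
  rw [col_calA]
  exact (hp s hs).linearIndependent_snoc_one

theorem eq_zero_of_forall_dotProduct_eq_zero (hp : InGeneralPosition p) (hs : s.card = r + 1)
    {c : Fin (r + 1) → ℝ} (hc : ∀ j ∈ s, (calA p).col j ⬝ᵥ c = 0) : c = 0 := by
  have hspan : Submodule.span ℝ ((calA p).col '' s) = ⊤ := by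
    rw [Set.image_eq_range]
    exact (hp.linearIndepOn_calA_col hs).span_eq_top_of_card_eq_finrank' (by simp [hs])
  have hdot : (dotProductBilin ℝ ℝ).flip c = 0 :=
    LinearMap.ext_on hspan (by rintro _ ⟨j, hj, rfl⟩; exact hc j hj)
  exact dotProduct_self_eq_zero.1 (LinearMap.congr_fun hdot c)

theorem rank_calA (hp : InGeneralPosition p) (hn : r + 1 ≤ n) : (calA p).rank = r + 1 := by
  obtain ⟨s, -, hs⟩ := (univ : Finset (Fin n)).exists_subset_card_eq (n := r + 1)
    (by simpa using hn)
  have hinj : Function.Injective (calA p)ᵀ.mulVecLin := by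
    rw [← LinearMap.ker_eq_bot, LinearMap.ker_eq_bot']
    exact fun c hc => hp.eq_zero_of_forall_dotProduct_eq_zero hs fun j _ => congrFun hc j
  rw [← rank_transpose, Matrix.rank, LinearMap.finrank_range_of_inj hinj]
  simp

theorem single_notMem_range_calA_transpose (hp : InGeneralPosition p) (hn : r + 2 ≤ n)
    (i : Fin n) : Pi.single i 1 ∉ LinearMap.range (calA p)ᵀ.mulVecLin := by
  rintro ⟨c, hc⟩
  obtain ⟨s, hsi, hs⟩ := (univ.erase i).exists_subset_card_eq (n := r + 1)
    (by rw [card_erase_of_mem (mem_univ i)]; simp; omega)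
  have hc0 : c = 0 := hp.eq_zero_of_forall_dotProduct_eq_zero hs fun j hj =>
    (congrFun hc j).trans (Pi.single_eq_of_ne (ne_of_mem_erase (hsi hj)) 1)
  simpa [hc0] using congrFun hc i

end InGeneralPosition

theorem mulVec_single_eq_zero_of_insert_neighborFinset_subset {n r : ℕ}
    {G : SimpleGraph (Fin n)} [DecidableRel G.Adj] {p : Fin n → Fin r → ℝ}
    {S : Matrix (Fin n) (Fin n) ℝ} (hzero : ∀ i j, i ≠ j → ¬G.Adj i j → S i j = 0)
    (hAS : calA p * S = 0) {s : Finset (Fin n)} (hs : LinearIndepOn ℝ (calA p).col s) {i : Fin n}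
    (hi : insert i (G.neighborFinset i) ⊆ s) : S *ᵥ Pi.single i 1 = 0 := by
  refine eq_zero_of_mulVec_eq_zero_of_linearIndepOn hs
    (by rw [mulVec_mulVec, hAS, zero_mulVec]) fun j hj => ?_
  have hji : j ≠ i := fun h => hj (hi (mem_insert.2 (Or.inl h)))
  have hadj : ¬G.Adj j i := fun h =>
    hj (hi (mem_insert_of_mem ((G.mem_neighborFinset i j).2 h.symm)))
  rw [mulVec_single_one]
  exact hzero j i hji hadj

theorem degree_ge_of_psd_stress_general {n r : ℕ} (hn : r + 2 ≤ n)
    (G : SimpleGraph (Fin n)) [DecidableRel G.Adj]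
    (p : Fin n → Fin r → ℝ) (hgen : InGeneralPosition p)
    (S : Matrix (Fin n) (Fin n) ℝ) (hS : IsStressMatrix G p S)
    (hrank : S.rank = n - r - 1) :
    ∀ i : Fin n, r + 1 ≤ G.degree i ∧
      (univ.filter (fun j => j ≠ i ∧ ¬ G.Adj i j)).card ≤ n - r - 2 := by
  obtain ⟨hsym, hzero, hAS⟩ := hS
  have hker : LinearMap.ker S.mulVecLin = LinearMap.range (calA p)ᵀ.mulVecLin :=
    ker_mulVecLin_eq_range_transpose hsym hAS <| by
      rw [hgen.rank_calA (by omega), hrank, Fintype.card_fin]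
      omega
  intro i
  have hdeg : r + 1 ≤ G.degree i := by
    by_contra! hlt
    obtain ⟨s, hsub, -, hs⟩ := exists_subsuperset_card_eq (n := r + 1) (subset_univ _)
      ((card_insert_le i (G.neighborFinset i)).trans (by simpa using hlt)) (by simp; omega)
    have hcol := mulVec_single_eq_zero_of_insert_neighborFinset_subset hzero hAS
      (hgen.linearIndepOn_calA_col hs) hsub
    exact hgen.single_notMem_range_calA_transpose hn i (hker ▸ LinearMap.mem_ker.2 hcol)
  refine ⟨hdeg, ?_⟩
  rw [G.card_filter_ne_not_adj, Fintype.card_fin]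
  omega

theorem degree_ge_of_psd_stress {n r : ℕ} (hn : r + 2 ≤ n)
    (G : SimpleGraph (Fin n)) [DecidableRel G.Adj]
    (p : Fin n → Fin r → ℝ) (hgen : InGeneralPosition p)
    (S : Matrix (Fin n) (Fin n) ℝ) (hS : IsStressMatrix G p S)
    (hpsd : S.PosSemidef) (hrank : S.rank = n - r - 1) :
    ∀ i : Fin n, r + 1 ≤ G.degree i ∧
      (univ.filter (fun j => j ≠ i ∧ ¬ G.Adj i j)).card ≤ n - r - 2 :=
  degree_ge_of_psd_stress_general hn G p hgen S hS hrank
end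

section
/- Let G(p) be a framework in ℝ^r. Suppose there exists a framework G(q) in ℝ^r with q^i = A p^i + b for all i (A an r×r matrix, b ∈ ℝ^r) that is equivalent to G(p), i.e. ‖q^i − q^j‖ = ‖p^i − p^j‖ for all edges (i,j), but not congruent to G(p). Then the vectors p^i − p^j for (i,j) ∈ E(G) lie on a quadratic at infinity, i.e., there is a nonzero symmetric r×r matrix Φ with (p^i − p^j)ᵀ Φ (p^i − p^j) = 0 for all edges (i,j). Conversely, if such a nonzero Φ exists, then there exists such an affinely-equivalent but non-congruent framework G(q). -/
/-!
An affine map `u ↦ A u + b` changes the squared length of a difference vector `w` by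
`wᵀ (AᵀA - 1) w`. So an affine flex yields the quadric at infinity `Φ = AᵀA - 1`, which is nonzero
because the flex is not a congruence. Conversely, `1 + tΦ` is positive semidefinite for small
`t > 0`, hence equal to `AᵀA` for some `A`; then `u ↦ A u` preserves the edge lengths. It cannot
preserve all lengths: by polarization, a symmetric form whose quadratic form vanishes on all
differences `p i - p j` of an affinely spanning configuration is zero.
-/

open Matrix Filter Topology WithLp
open scoped MatrixOrder

theorem LinearMap.BilinForm.IsSymm.eq_zero_of_apply_vsub_self_eq_zero {K V P ι : Type*} [Field K]
    [NeZero (2 : K)] [AddCommGroup V] [Module K V] [AddTorsor V P]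
    {B : LinearMap.BilinForm K V} (hB : B.IsSymm) {p : ι → P}
    (hp : affineSpan K (Set.range p) = ⊤) (h : ∀ i j, B (p i -ᵥ p j) (p i -ᵥ p j) = 0) :
    B = 0 := by
  obtain ⟨-, i₀, rfl⟩ := AffineSubspace.nonempty_of_affineSpan_eq_top K V P hp
  have hpolar : ∀ i j, B (p i -ᵥ p i₀) (p j -ᵥ p i₀) = 0 := by
    intro i j
    have hij := h i j
    rw [← vsub_sub_vsub_cancel_right (p i) (p j) (p i₀)] at hij
    simp only [map_sub, LinearMap.sub_apply, h i i₀, h j i₀, hB.eq (p j -ᵥ p i₀)] at hij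
    have h2 : (2 : K) * B (p i -ᵥ p i₀) (p j -ᵥ p i₀) = 0 := by linear_combination -hij
    exact (mul_eq_zero.mp h2).resolve_left two_ne_zero
  have hspan : Submodule.span K (Set.range fun i => p i -ᵥ p i₀) = ⊤ := by
    rw [← vectorSpan_range_eq_span_range_vsub_right,
      AffineSubspace.vectorSpan_eq_top_of_affineSpan_eq_top K V P hp]
  refine LinearMap.ext_on hspan ?_
  rintro - ⟨i, rfl⟩
  exact LinearMap.ext_on hspan (by rintro - ⟨j, rfl⟩; exact hpolar i j)

theorem Matrix.IsSymm.eq_zero_of_dotProduct_mulVec_sub_self_eq_zero {K n ι : Type*} [Field K]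
    [NeZero (2 : K)] [Fintype n] {Φ : Matrix n n K} (hΦ : Φ.IsSymm) {p : ι → n → K}
    (hp : affineSpan K (Set.range p) = ⊤) (h : ∀ i j, (p i - p j) ⬝ᵥ Φ *ᵥ (p i - p j) = 0) :
    Φ = 0 := by
  classical
  rw [← toBilin'.map_eq_zero_iff]
  exact (isSymm_toBilin'_iff_isSymm.mpr hΦ).eq_zero_of_apply_vsub_self_eq_zero hp
    fun i j => (toBilin'_apply' _ _ _).trans (h i j)

theorem Matrix.IsHermitian.exists_pos_one_add_smul_nonneg {n 𝕜 : Type*} [Fintype n]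
    [DecidableEq n] [RCLike 𝕜] {Φ : Matrix n n 𝕜} (hΦ : Φ.IsHermitian) :
    ∃ t : ℝ, 0 < t ∧ 0 ≤ 1 + t • Φ := by
  have hsmall : ∀ᶠ t in 𝓝[>] (0 : ℝ), ∀ x ∈ spectrum ℝ Φ, 0 ≤ 1 + t * x := by
    refine Φ.finite_real_spectrum.eventually_all.2 fun x _ => nhdsWithin_le_nhds ?_
    have : Tendsto (fun t : ℝ => 1 + t * x) (𝓝 0) (𝓝 1) :=
      (by fun_prop : Continuous fun t : ℝ => 1 + t * x).tendsto' 0 1 (by simp)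
    exact this.eventually (eventually_ge_nhds zero_lt_one)
  obtain ⟨t, hspec, ht⟩ := (hsmall.and self_mem_nhdsWithin).exists
  have hcfc : cfc (fun x : ℝ => 1 + t * x) Φ = 1 + t • Φ := by
    rw [cfc_add .., cfc_const_one .., cfc_const_mul_id ..]
  exact ⟨t, ht, hcfc ▸ cfc_nonneg hspec⟩

theorem Matrix.IsSymm.exists_pos_transpose_mul_self_eq_one_add_smul {n : Type*} [Fintype n]
    [DecidableEq n] {Φ : Matrix n n ℝ} (hΦ : Φ.IsSymm) :
    ∃ t : ℝ, 0 < t ∧ ∃ A : Matrix n n ℝ, Aᵀ * A = 1 + t • Φ := by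
  obtain ⟨t, ht, hnonneg⟩ := (isHermitian_iff_isSymm.mpr hΦ).exists_pos_one_add_smul_nonneg
  obtain ⟨A, hA⟩ := CStarAlgebra.nonneg_iff_eq_star_mul_self.mp hnonneg
  exact ⟨t, ht, A, hA.symm⟩

theorem EuclideanSpace.real_norm_sq_eq_dotProduct {n : Type*} [Fintype n]
    (x : EuclideanSpace ℝ n) : ‖x‖ ^ 2 = ofLp x ⬝ᵥ ofLp x := by
  rw [← real_inner_self_eq_norm_sq, EuclideanSpace.inner_eq_star_dotProduct, star_trivial]

theorem Matrix.dist_toEuclideanLin_add_sq {n : Type*} [Fintype n] [DecidableEq n]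
    (A : Matrix n n ℝ) (b u v : EuclideanSpace ℝ n) :
    dist (toEuclideanLin A u + b) (toEuclideanLin A v + b) ^ 2 =
      dist u v ^ 2 + (ofLp u - ofLp v) ⬝ᵥ (Aᵀ * A - 1) *ᵥ (ofLp u - ofLp v) := by
  rw [dist_eq_norm, dist_eq_norm, add_sub_add_right_eq_sub, ← map_sub,
    EuclideanSpace.real_norm_sq_eq_dotProduct, EuclideanSpace.real_norm_sq_eq_dotProduct]
  simp only [toLpLin_apply, ofLp_toLp, ofLp_sub, sub_mulVec, one_mulVec, dotProduct_sub,
    ← mulVec_mulVec, dotProduct_mulVec _ Aᵀ, vecMul_transpose]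
  ring

theorem Matrix.dist_toEuclideanLin_add_eq_dist_iff {n : Type*} [Fintype n] [DecidableEq n]
    (A : Matrix n n ℝ) (b u v : EuclideanSpace ℝ n) :
    dist (toEuclideanLin A u + b) (toEuclideanLin A v + b) = dist u v ↔
      (ofLp u - ofLp v) ⬝ᵥ (Aᵀ * A - 1) *ᵥ (ofLp u - ofLp v) = 0 := by
  rw [← sq_eq_sq₀ dist_nonneg dist_nonneg, dist_toEuclideanLin_add_sq, add_eq_left]

theorem affine_flex_iff_quadric_at_infinity {n r : ℕ}
    (G : SimpleGraph (Fin n)) (p : Fin n → EuclideanSpace ℝ (Fin r))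
    (hspan : affineSpan ℝ (Set.range p) = ⊤) :
    (∃ (q : Fin n → EuclideanSpace ℝ (Fin r)) (A : Matrix (Fin r) (Fin r) ℝ)
        (b : EuclideanSpace ℝ (Fin r)),
      (∀ i, q i = Matrix.toEuclideanLin A (p i) + b) ∧
      (∀ i j, G.Adj i j → dist (q i) (q j) = dist (p i) (p j)) ∧
      ¬ (∀ i j, dist (q i) (q j) = dist (p i) (p j))) ↔
    (∃ Φ : Matrix (Fin r) (Fin r) ℝ, Φ ≠ 0 ∧ Φ.IsSymm ∧
      ∀ i j, G.Adj i j →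
        (fun k => p i k - p j k) ⬝ᵥ Φ.mulVec (fun k => p i k - p j k) = 0) := by
  constructor
  · rintro ⟨q, A, b, hq, hedge, hflex⟩
    obtain rfl : q = fun i => toEuclideanLin A (p i) + b := funext hq
    refine ⟨Aᵀ * A - 1, fun hΦ => hflex fun i j => ?_, by simp [IsSymm], fun i j hij => ?_⟩
    · exact (dist_toEuclideanLin_add_eq_dist_iff A b _ _).mpr
        (by rw [hΦ, zero_mulVec, dotProduct_zero])
    · exact (dist_toEuclideanLin_add_eq_dist_iff A b _ _).mp (hedge i j hij)
  · rintro ⟨Φ, hΦ0, hΦ, hedge⟩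
    obtain ⟨t, ht, A, hA⟩ := hΦ.exists_pos_transpose_mul_self_eq_one_add_smul
    have hlen : ∀ i j, dist (toEuclideanLin A (p i) + 0) (toEuclideanLin A (p j) + 0) =
        dist (p i) (p j) ↔ (ofLp (p i) - ofLp (p j)) ⬝ᵥ Φ *ᵥ (ofLp (p i) - ofLp (p j)) = 0 := by
      intro i j
      rw [dist_toEuclideanLin_add_eq_dist_iff, hA, add_sub_cancel_left, smul_mulVec,
        dotProduct_smul, smul_eq_zero, or_iff_right ht.ne']
    have hspan' : affineSpan ℝ (Set.range fun i => ofLp (p i)) = ⊤ := by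
      have := (AffineEquiv.span_eq_top_iff (WithLp.linearEquiv 2 ℝ _).toAffineEquiv).1 hspan
      rwa [← Set.range_comp] at this
    exact ⟨_, A, 0, fun i => rfl, fun i j hij => (hlen i j).mpr (hedge i j hij),
      fun hall => hΦ0 (hΦ.eq_zero_of_dotProduct_mulVec_sub_self_eq_zero hspan' fun i j =>
        (hlen i j).mp (hall i j))⟩
end

section
/- Let G(p) be a framework on n nodes in general position in ℝ^r, let S be a stress matrix of G(p) of rank r̄ = n−r−1, and let Ẑ be the Gale matrix of p with Ẑ_{ij} = 0 for all i ∈ N̄(j+r+1), constructed from the last r̄ columns of S with Z₂ nonsingular. Let ℰ(y) be the n×n symmetric matrix with (k,l)-entry y_{kl} if k ≠ l and (k,l) ∉ E(G), and 0 otherwise, and let V be an n×(n−1) matrix with Vᵀe = 0, VᵀV = I. Then Vᵀ ℰ(y) Ẑ = 0 holds if and only if ℰ(y) Ẑ = 0. -/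
open Matrix Finset

/-- The symmetric matrix `ℰ(y)` supported on the non-edges of `G`. -/
def Emat {n : ℕ} (G : SimpleGraph (Fin n)) [DecidableRel G.Adj]
    (y : Fin n → Fin n → ℝ) : Matrix (Fin n) (Fin n) ℝ :=
  fun k l => if k ≠ l ∧ ¬ G.Adj k l then y k l else 0

theorem VtEZ_eq_zero_iff_EZ_eq_zero {n r : ℕ} (hn : r + 2 ≤ n)
    (G : SimpleGraph (Fin n)) [DecidableRel G.Adj]
    (p : Fin n → Fin r → ℝ) (hgen : InGeneralPosition p)
    (S : Matrix (Fin n) (Fin n) ℝ) (hS : IsStressMatrix G p S)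
    (hrank : S.rank = n - r - 1)
    (Zh : Matrix (Fin n) (Fin (n - r - 1)) ℝ) (hZh : IsGaleMatrix p Zh)
    (hpattern : ∀ (j : Fin (n - r - 1)) (i : Fin n),
      i ≠ vertOf n r j → ¬ G.Adj i (vertOf n r j) → Zh i j = 0)
    (hlast : ∀ (i : Fin n) (j : Fin (n - r - 1)), Zh i j = S i (vertOf n r j))
    (V : Matrix (Fin n) (Fin (n - 1)) ℝ)
    (hV1 : Vᵀ * V = 1) (hV2 : Vᵀ *ᵥ (fun _ => (1 : ℝ)) = 0)
    (y : Fin n → Fin n → ℝ) (hysym : ∀ i j, y i j = y j i) :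
    Vᵀ * Emat G y * Zh = 0 ↔ Emat G y * Zh = 0 := by
  constructor
  · intro h
    -- Step 1: kernel of Vᵀ is the span of the all-ones vector.
    have hker : ∀ x : Fin n → ℝ, Vᵀ *ᵥ x = 0 → ∃ c : ℝ, x = c • (fun _ => (1 : ℝ)) := by
      set f := Matrix.mulVecLin Vᵀ with hf
      have hsurj : Function.Surjective f := by
        intro b
        refine ⟨V *ᵥ b, ?_⟩
        simp only [hf, Matrix.mulVecLin_apply, Matrix.mulVec_mulVec, hV1,
          Matrix.one_mulVec]
      have hrange : LinearMap.range f = ⊤ := LinearMap.range_eq_top.2 hsurj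
      have hrk : Module.finrank ℝ (LinearMap.range f) = n - 1 := by
        rw [hrange]
        simpa using (Module.finrank_fin_fun (n := n - 1) ℝ)
      have hrn := LinearMap.finrank_range_add_finrank_ker f
      have hdom : Module.finrank ℝ (Fin n → ℝ) = n := by
        simpa using (Module.finrank_fin_fun (n := n) ℝ)
      have hkerdim : Module.finrank ℝ (LinearMap.ker f) = 1 := by
        rw [hrk, hdom] at hrn; omega
      have he0 : (fun _ : Fin n => (1 : ℝ)) ≠ 0 := by
        intro hcontra
        have := congrFun hcontra ⟨0, by omega⟩
        simp at this
      have hespan : (ℝ ∙ (fun _ : Fin n => (1 : ℝ))) ≤ LinearMap.ker f := by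
        rw [Submodule.span_singleton_le_iff_mem]
        simp only [hf, LinearMap.mem_ker, Matrix.mulVecLin_apply]
        exact hV2
      have heq : (ℝ ∙ (fun _ : Fin n => (1 : ℝ))) = LinearMap.ker f := by
        apply Submodule.eq_of_le_of_finrank_le hespan
        rw [hkerdim, finrank_span_singleton he0]
      intro x hx
      have hxker : x ∈ LinearMap.ker f := by
        simp only [hf, LinearMap.mem_ker, Matrix.mulVecLin_apply]
        exact hx
      rw [← heq, Submodule.mem_span_singleton] at hxker
      obtain ⟨c, hc⟩ := hxker
      exact ⟨c, hc.symm⟩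
    -- Step 2: each column of Emat G y * Zh is a multiple of e.
    ext i j
    have hcol : Vᵀ *ᵥ (fun i => (Emat G y * Zh) i j) = 0 := by
      funext k
      have h' : Vᵀ * (Emat G y * Zh) = 0 := by rw [← Matrix.mul_assoc]; exact h
      have h2 := congrFun (congrFun h' k) j
      have h3 : (Vᵀ *ᵥ fun i => (Emat G y * Zh) i j) k
          = (Vᵀ * (Emat G y * Zh)) k j := by rw [Matrix.mul_apply]; rfl
      rw [h3, h2]; rfl
    obtain ⟨c, hc⟩ := hker _ hcol
    -- Step 3: evaluate at vertOf n r j to find c = 0.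
    have hzero : (Emat G y * Zh) (vertOf n r j) j = 0 := by
      rw [Matrix.mul_apply]
      apply Finset.sum_eq_zero
      intro l _
      unfold Emat
      by_cases hc1 : vertOf n r j ≠ l ∧ ¬ G.Adj (vertOf n r j) l
      · have hZ : Zh l j = 0 := by
          apply hpattern j l (Ne.symm hc1.1)
          intro hadj
          exact hc1.2 hadj.symm
        simp [hc1, hZ]
      · simp [hc1]
    have hcval := congrFun hc (vertOf n r j)
    simp only [Pi.smul_apply, smul_eq_mul, mul_one] at hcval
    rw [hzero] at hcval
    have := congrFun hc i
    simp only [Pi.smul_apply, smul_eq_mul, mul_one] at this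
    rw [this, ← hcval]
    rfl
  · intro h
    rw [Matrix.mul_assoc, h, Matrix.mul_zero]
end

section
/- Let G(p) be a framework on n nodes in general position in ℝ^r with r ≤ n−2, admitting a positive semidefinite stress matrix S of rank n−r−1. Then the vectors p^i − p^j for (i,j) ∈ E(G) do not lie on a quadratic at infinity; i.e., there is no nonzero symmetric r×r matrix Φ with (p^i − p^j)ᵀΦ(p^i − p^j) = 0 for all edges (i,j). -/
open Matrix

/-!
The kernel of a stress matrix `S` contains the affine functions `j ↦ ℓ ⬝ᵥ p j + c`; by general
position these span an `(r + 1)`-dimensional space, so the rank assumption makes them the whole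
kernel, and a kernel vector vanishing at `r + 1` of the points is zero. Positive semidefiniteness
gives `S i i ≠ 0`, and then the columns of `S` at `i` and at `n - r - 1` non-neighbours of `i`
would be independent, exceeding the rank: every vertex has at most `n - r - 2` non-neighbours.
If the quadratic form of `Φ` vanishes on the edge directions, equilibrium makes its values
`j ↦ Φ[p i - p j]` a kernel vector for each `i`; this vector vanishes at `i` and at its
neighbours, hence everywhere, and polarisation over the spanning differences `p i - p j` gives
`Φ = 0`.
-/

namespace Matrix

variable {K m n : Type*} [Fintype n]

theorem card_le_rank_of_linearIndepOn_col [Field K] [Fintype m] {M : Matrix m n K} {s : Finset n}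
    (h : LinearIndepOn K M.col (s : Set n)) : s.card ≤ M.rank := by
  rw [rank_eq_finrank_span_cols]
  calc s.card = Module.finrank K (Submodule.span K (Set.range fun j : (s : Set n) => M.col j)) := by
        rw [finrank_span_eq_card h]; simp
    _ ≤ _ := Submodule.finrank_mono (Submodule.span_mono (Set.range_comp_subset_range _ _))

theorem linearIndepOn_col_of_mulVec_eq_zero [CommRing K] {M : Matrix m n K} {s : Finset n}
    (h : ∀ x, (∀ j ∉ s, x j = 0) → M *ᵥ x = 0 → x = 0) :
    LinearIndepOn K M.col (s : Set n) := by
  classical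
  refine linearIndepOn_finset_iff.mpr fun f hf j hj => ?_
  have hx := h (fun j => if j ∈ s then f j else 0) (fun j hj => if_neg hj) (by
    rw [mulVec_eq_sum, ← hf]
    simp only [ite_smul, zero_smul, op_smul_eq_smul]
    rw [Finset.sum_ite_mem, Finset.univ_inter]; rfl)
  simpa [hj] using congrFun hx j

end Matrix

theorem eq_zero_of_dotProduct_eq_zero_of_span_eq_top {K m : Type*} [Field K] [Fintype m]
    {s : Set (m → K)} (hs : Submodule.span K s = ⊤) {w : m → K}
    (h : ∀ x ∈ s, x ⬝ᵥ w = 0) : w = 0 := by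
  have hw : (dotProductBilin K K).flip w = 0 :=
    LinearMap.ext_on hs fun x hx => by simpa using h x hx
  exact dotProduct_eq_zero w fun x => by
    simpa [dotProduct_comm] using LinearMap.congr_fun hw x

theorem Matrix.IsSymm.sub_dotProduct_mulVec_sub {K m : Type*} [CommRing K] [Fintype m]
    {Φ : Matrix m m K} (hΦ : Φ.IsSymm) (u v : m → K) :
    (u - v) ⬝ᵥ Φ *ᵥ (u - v) = u ⬝ᵥ Φ *ᵥ u + v ⬝ᵥ Φ *ᵥ v - 2 * (u ⬝ᵥ Φ *ᵥ v) := by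
  have hvu : v ⬝ᵥ Φ *ᵥ u = u ⬝ᵥ Φ *ᵥ v := by
    rw [dotProduct_mulVec, ← hΦ.eq, vecMul_transpose, hΦ.eq, dotProduct_comm]
  rw [mulVec_sub, dotProduct_sub, sub_dotProduct, sub_dotProduct, hvu]
  ring

theorem Matrix.IsSymm.eq_zero_of_sub_dotProduct_mulVec_sub_eq_zero {ι m : Type*} [Fintype m]
    {Φ : Matrix m m ℝ} (hΦ : Φ.IsSymm) {p : ι → m → ℝ} (hspan : affineSpan ℝ (Set.range p) = ⊤)
    (h : ∀ i j, (p i - p j) ⬝ᵥ Φ *ᵥ (p i - p j) = 0) : Φ = 0 := by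
  obtain ⟨_, i₀, rfl⟩ := AffineSubspace.nonempty_of_affineSpan_eq_top ℝ _ _ hspan
  have hvspan : Submodule.span ℝ (Set.range fun i => p i - p i₀) = ⊤ := by
    rw [← AffineSubspace.vectorSpan_eq_top_of_affineSpan_eq_top ℝ _ _ hspan,
      vectorSpan_range_eq_span_range_vsub_right ℝ p i₀]
    rfl
  have hpolar : ∀ i j, (p i - p i₀) ⬝ᵥ Φ *ᵥ (p j - p i₀) = 0 := fun i j => by
    have := hΦ.sub_dotProduct_mulVec_sub (p i - p i₀) (p j - p i₀)
    rw [sub_sub_sub_cancel_right, h, h, h] at this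
    linarith
  have hcol : ∀ j, Φ *ᵥ (p j - p i₀) = 0 := fun j =>
    eq_zero_of_dotProduct_eq_zero_of_span_eq_top hvspan (by rintro _ ⟨i, rfl⟩; exact hpolar i j)
  funext a
  exact eq_zero_of_dotProduct_eq_zero_of_span_eq_top hvspan <| by
    rintro _ ⟨j, rfl⟩
    rw [dotProduct_comm]
    exact congrFun (hcol j) a

section calA

variable {n r : ℕ} {p : Fin n → Fin r → ℝ}

theorem transpose_calA_mulVec_snoc (ℓ : Fin r → ℝ) (c : ℝ) :
    (calA p)ᵀ *ᵥ Fin.snoc ℓ c = fun j => ℓ ⬝ᵥ p j + c := by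
  funext j
  simp [mulVec, dotProduct, Fin.sum_univ_castSucc, calA, mul_comm]

theorem InGeneralPosition.linearIndepOn_col_calA (hgen : InGeneralPosition p)
    {s : Finset (Fin n)} (hs : s.card = r + 1) :
    LinearIndepOn ℝ (calA p).col (s : Set (Fin n)) := by
  refine Fintype.linearIndependent_iff.mpr fun g hg => ?_
  have hsum : ∑ j, g j = 0 := by
    simpa [calA, Finset.sum_apply] using congrFun hg (Fin.last r)
  have hsmul : ∑ j, g j • p j = 0 := funext fun a => by
    simpa [calA, Finset.sum_apply] using congrFun hg a.castSucc
  exact fun j => (hgen s hs).eq_zero_of_sum_eq_zero hsum hsmul j (Finset.mem_univ j)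

theorem InGeneralPosition.span_col_calA_eq_top (hgen : InGeneralPosition p)
    {s : Finset (Fin n)} (hs : s.card = r + 1) :
    Submodule.span ℝ (Set.range fun j : (s : Set (Fin n)) => (calA p).col j) = ⊤ := by
  have : Nonempty (s : Set (Fin n)) := (Finset.card_pos.mp (by omega)).to_subtype
  exact (hgen.linearIndepOn_col_calA hs).span_eq_top_of_card_eq_finrank (by simp [hs])

theorem InGeneralPosition.rank_calA_s12 (hgen : InGeneralPosition p) (hn : r + 1 ≤ n) :
    (calA p).rank = r + 1 := by
  obtain ⟨s, -, hs⟩ :=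
    Finset.exists_subset_card_eq (show r + 1 ≤ (Finset.univ : Finset (Fin n)).card by simpa)
  exact le_antisymm (rank_le_height _)
    (hs.ge.trans (card_le_rank_of_linearIndepOn_col (hgen.linearIndepOn_col_calA hs)))

end calA

section Stress

variable {n r : ℕ} {p : Fin n → Fin r → ℝ} {S : Matrix (Fin n) (Fin n) ℝ}

theorem mul_transpose_calA_eq_zero (hsymm : S.IsSymm) (hAS : calA p * S = 0) :
    S * (calA p)ᵀ = 0 := by
  rw [← hsymm.eq, ← transpose_mul, hAS, transpose_zero]

theorem mulVec_affine_eq_zero (hsymm : S.IsSymm) (hAS : calA p * S = 0) (ℓ : Fin r → ℝ) (c : ℝ) :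
    S *ᵥ (fun j => ℓ ⬝ᵥ p j + c) = 0 := by
  rw [← transpose_calA_mulVec_snoc, mulVec_mulVec, mul_transpose_calA_eq_zero hsymm hAS,
    zero_mulVec]

theorem ker_mulVecLin_eq_range_transpose_calA (hsymm : S.IsSymm) (hAS : calA p * S = 0)
    (hgen : InGeneralPosition p) (hn : r + 1 ≤ n) (hrank : S.rank = n - r - 1) :
    LinearMap.ker S.mulVecLin = LinearMap.range (calA p)ᵀ.mulVecLin := by
  refine (Submodule.eq_of_le_of_finrank_le ?_ ?_).symm
  · rintro _ ⟨w, rfl⟩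
    rw [LinearMap.mem_ker, mulVecLin_apply, mulVecLin_apply, mulVec_mulVec,
      mul_transpose_calA_eq_zero hsymm hAS, zero_mulVec]
  · have hker := LinearMap.finrank_range_add_finrank_ker S.mulVecLin
    have hrange : Module.finrank ℝ (LinearMap.range (calA p)ᵀ.mulVecLin) = r + 1 := by
      rw [← Matrix.rank, rank_transpose, hgen.rank_calA_s12 hn]
    rw [← Matrix.rank, hrank, Module.finrank_fin_fun] at hker
    omega

theorem eq_zero_of_mulVec_eq_zero_of_support_subset (hsymm : S.IsSymm) (hAS : calA p * S = 0)
    (hgen : InGeneralPosition p) (hrank : S.rank = n - r - 1) {v : Fin n → ℝ}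
    (hv : S *ᵥ v = 0) {t : Finset (Fin n)} (hvt : ∀ j ∉ t, v j = 0) (ht : t.card + (r + 1) ≤ n) :
    v = 0 := by
  have hmem : v ∈ LinearMap.ker S.mulVecLin := hv
  rw [ker_mulVecLin_eq_range_transpose_calA hsymm hAS hgen (by omega) hrank] at hmem
  obtain ⟨w, rfl⟩ := hmem
  obtain ⟨s, hst, hs⟩ := Finset.exists_subset_card_eq
    (show r + 1 ≤ tᶜ.card by rw [Finset.card_compl, Fintype.card_fin]; omega)
  have hw : w = 0 := by
    refine eq_zero_of_dotProduct_eq_zero_of_span_eq_top (hgen.span_col_calA_eq_top hs) ?_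
    rintro _ ⟨j, rfl⟩
    exact hvt j (Finset.mem_compl.mp (hst j.2))
  simp [hw]

variable {G : SimpleGraph (Fin n)}

theorem IsStressMatrix.degree_compl_add_le [DecidableRel G.Adj] (hS : IsStressMatrix G p S)
    (hpsd : S.PosSemidef) (hgen : InGeneralPosition p) (hn : r + 2 ≤ n)
    (hrank : S.rank = n - r - 1) (i : Fin n) : Gᶜ.degree i + (r + 1) ≤ n := by
  obtain ⟨hsymm, hzero, hAS⟩ := hS
  have hii : S i i ≠ 0 := by
    intro h0
    have hSi : S *ᵥ Pi.single i 1 = 0 :=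
      (hpsd.dotProduct_mulVec_zero_iff _).mp (by simp [h0])
    have hi := eq_zero_of_mulVec_eq_zero_of_support_subset hsymm hAS hgen hrank hSi (t := {i})
      (fun j hj => Pi.single_eq_of_ne (Finset.notMem_singleton.mp hj) 1) (by simp; omega)
    simpa using congrFun hi i
  by_contra! hdeg
  obtain ⟨M, hM, hMcard⟩ := Finset.exists_subset_card_eq
    (show n - r - 1 ≤ (Gᶜ.neighborFinset i).card by
      rw [SimpleGraph.card_neighborFinset_eq_degree]; omega)
  have hMadj : ∀ j ∈ M, i ≠ j ∧ ¬ G.Adj i j := fun j hj =>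
    (SimpleGraph.compl_adj G i j).mp ((SimpleGraph.mem_neighborFinset _ _ _).mp (hM hj))
  have hiM : i ∉ M := fun hi => (hMadj i hi).1 rfl
  have hindep : LinearIndepOn ℝ S.col ((insert i M : Finset (Fin n)) : Set (Fin n)) := by
    refine linearIndepOn_col_of_mulVec_eq_zero fun x hx hSx => ?_
    -- row `i` of `S` vanishes on `M`, so the `i`-th equation reads `S i i * x i = 0`
    have hxi : x i = 0 := by
      have hrow := congrFun hSx i
      rw [mulVec, dotProduct, Finset.sum_eq_single i] at hrow
      · exact (mul_eq_zero.mp hrow).resolve_left hii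
      · intro j _ hji
        by_cases hj : j ∈ M
        · rw [hzero i j (hMadj j hj).1 (hMadj j hj).2, zero_mul]
        · rw [hx j (by simp [hji, hj]), mul_zero]
      · simp
    refine eq_zero_of_mulVec_eq_zero_of_support_subset hsymm hAS hgen hrank hSx (t := M)
      (fun j hj => ?_) (by omega)
    by_cases hji : j = i
    · rw [hji, hxi]
    · exact hx j (by simp [hji, hj])
  have hcard := card_le_rank_of_linearIndepOn_col hindep
  rw [Finset.card_insert_of_notMem hiM, hrank] at hcard
  omega

theorem IsStressMatrix.mulVec_sub_dotProduct_mulVec_sub_eq_zero (hS : IsStressMatrix G p S)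
    {Φ : Matrix (Fin r) (Fin r) ℝ} (hΦ : Φ.IsSymm)
    (hedge : ∀ i j, G.Adj i j → (p i - p j) ⬝ᵥ Φ *ᵥ (p i - p j) = 0) (i : Fin n) :
    S *ᵥ (fun j => (p i - p j) ⬝ᵥ Φ *ᵥ (p i - p j)) = 0 := by
  obtain ⟨hsymm, hzero, hAS⟩ := hS
  set y : Fin n → ℝ := fun j => p j ⬝ᵥ Φ *ᵥ p j
  -- the quadratic form at `p i - p j` differs from that at `p j` by an affine function of `p j`
  have hshift : ∀ i, S *ᵥ (fun j => (p i - p j) ⬝ᵥ Φ *ᵥ (p i - p j)) = S *ᵥ y := fun i => by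
    have hsplit : (fun j => (p i - p j) ⬝ᵥ Φ *ᵥ (p i - p j))
        = y + fun j => (-2 • (p i ᵥ* Φ)) ⬝ᵥ p j + p i ⬝ᵥ Φ *ᵥ p i := funext fun j => by
      simp only [hΦ.sub_dotProduct_mulVec_sub, Pi.add_apply, smul_dotProduct, dotProduct_mulVec, y]
      ring
    rw [hsplit, mulVec_add, mulVec_affine_eq_zero hsymm hAS (-2 • (p i ᵥ* Φ)), add_zero]
  have hy : S *ᵥ y = 0 := funext fun k => by
    rw [← hshift k, Pi.zero_apply, mulVec, dotProduct]
    refine Finset.sum_eq_zero fun j _ => ?_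
    by_cases hkj : k = j
    · simp [hkj]
    by_cases hadj : G.Adj k j
    · simp [hedge k j hadj]
    · simp [hzero k j hkj hadj]
  rw [hshift, hy]

end Stress

theorem no_quadric_at_infinity_of_general_position {n r : ℕ} (hn : r + 2 ≤ n)
    (G : SimpleGraph (Fin n)) (p : Fin n → Fin r → ℝ)
    (hgen : InGeneralPosition p)
    (hspan : affineSpan ℝ (Set.range p) = ⊤)
    (S : Matrix (Fin n) (Fin n) ℝ) (hS : IsStressMatrix G p S)
    (hpsd : S.PosSemidef) (hrank : S.rank = n - r - 1) :
    ¬ ∃ Φ : Matrix (Fin r) (Fin r) ℝ, Φ ≠ 0 ∧ Φ.IsSymm ∧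
      ∀ i j, G.Adj i j → (p i - p j) ⬝ᵥ Φ.mulVec (p i - p j) = 0 := by
  classical
  rintro ⟨Φ, hΦ, hsymm, hedge⟩
  refine hΦ (hsymm.eq_zero_of_sub_dotProduct_mulVec_sub_eq_zero hspan fun i j => ?_)
  have hker := hS.mulVec_sub_dotProduct_mulVec_sub_eq_zero hsymm hedge i
  -- the kernel vector is supported on the non-neighbours of `i`, which are too few
  have hsupp : ∀ j ∉ Gᶜ.neighborFinset i, (p i - p j) ⬝ᵥ Φ *ᵥ (p i - p j) = 0 := fun j hj => by
    rw [SimpleGraph.mem_neighborFinset, SimpleGraph.compl_adj, not_and_or, not_not, not_not] at hj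
    rcases hj with rfl | hadj
    · simp
    · exact hedge i j hadj
  have hzero := eq_zero_of_mulVec_eq_zero_of_support_subset hS.1 hS.2.2 hgen hrank hker hsupp
    (by rw [SimpleGraph.card_neighborFinset_eq_degree]
        exact hS.degree_compl_add_le hpsd hgen hn hrank i)
  exact congrFun hzero j
end

section
/- Let p^1,...,p^n be in general position in ℝ^r with n ≥ r+2, and let Z be a Gale matrix of p partitioned as Z = [Z₁; Z₂] where Z₂ consists of the last r̄ = n−r−1 rows. If S = ZΨZᵀ is a stress matrix of G(p) of rank r̄ (Ψ symmetric nonsingular), then Ẑ := ZΨZ₂ᵀ equals the submatrix of S consisting of its last r̄ columns, and Ẑ is itself a Gale matrix of p. -/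
open Matrix

private lemma sum_smul_col {n m : ℕ} (M : Matrix (Fin n) (Fin m) ℝ) (c : Fin m → ℝ) :
    ∑ j, c j • (fun i => M i j) = M *ᵥ c := by
  funext i
  simp [Matrix.mulVec, dotProduct, Finset.sum_apply, mul_comm]

/-- If `calA p *ᵥ x = 0` and `x` vanishes on the last `n - r - 1` coordinates,
then `x = 0`, by general position. -/
private lemma key_vanish {n r : ℕ} (hn : r + 2 ≤ n) (p : Fin n → Fin r → ℝ)
    (hgen : InGeneralPosition p) (x : Fin n → ℝ)
    (hx : calA p *ᵥ x = 0) (hsup : ∀ j, x (vertOf n r j) = 0) : x = 0 := by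
  -- the set of the first r+1 indices
  set s : Finset (Fin n) :=
    Finset.image (Fin.castLE (by omega : r + 1 ≤ n)) Finset.univ with hs
  have hcard : s.card = r + 1 := by
    rw [hs, Finset.card_image_of_injective _ (Fin.castLE_injective _)]
    simp
  have hmem : ∀ i : Fin n, i ∈ s ↔ (i : ℕ) < r + 1 := by
    intro i
    simp only [hs, Finset.mem_image, Finset.mem_univ, true_and]
    constructor
    · rintro ⟨j, rfl⟩; exact j.isLt
    · intro h; exact ⟨⟨i, h⟩, by ext; simp⟩
  have hout : ∀ i : Fin n, i ∉ s → x i = 0 := by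
    intro i hi
    rw [hmem] at hi
    push_neg at hi
    have hlt : (i : ℕ) - (r + 1) < n - r - 1 := by have := i.isLt; omega
    have : i = vertOf n r ⟨(i : ℕ) - (r + 1), hlt⟩ := by
      ext; simp [vertOf]; omega
    rw [this]; exact hsup _
  -- the linear conditions from calA p *ᵥ x = 0
  have hsum1 : ∑ j, x j = 0 := by
    have h := congrFun hx ⟨r, by omega⟩
    simpa [calA, Matrix.mulVec, dotProduct] using h
  have hsump : ∑ j, x j • p j = 0 := by
    funext k
    have h := congrFun hx ⟨(k : ℕ), by omega⟩
    simp only [calA, Matrix.mulVec, dotProduct, Fin.isLt, dif_pos,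
      Pi.zero_apply] at h
    simpa [Finset.sum_apply, mul_comm, Fin.eta] using h
  -- apply affine independence of the first r+1 points
  have hai := hgen s hcard
  rw [affineIndependent_iff] at hai
  have hzero : ∀ i : {y // y ∈ s}, x i = 0 := by
    have h1 : ∑ i : {y // y ∈ s}, x i.1 = 0 := by
      rw [Finset.sum_coe_sort s (fun i => x i),
        Finset.sum_subset (Finset.subset_univ s) (fun i _ hi => hout i hi)]
      exact hsum1
    have h2 : ∑ i : {y // y ∈ s}, x i.1 • p i.1 = 0 := by
      rw [Finset.sum_coe_sort s (fun i => x i • p i),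
        Finset.sum_subset (Finset.subset_univ s)
          (fun i _ hi => by rw [hout i hi, zero_smul])]
      exact hsump
    intro i
    exact hai Finset.univ (fun i => x i.1) h1 h2 i (Finset.mem_univ i)
  funext i
  by_cases hi : i ∈ s
  · exact hzero ⟨i, hi⟩
  · exact hout i hi

theorem hatZ_eq_last_columns_and_gale {n r : ℕ} (hn : r + 2 ≤ n)
    (G : SimpleGraph (Fin n)) (p : Fin n → Fin r → ℝ)
    (hgen : InGeneralPosition p)
    (Z : Matrix (Fin n) (Fin (n - r - 1)) ℝ) (hZ : IsGaleMatrix p Z)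
    (Ψ : Matrix (Fin (n - r - 1)) (Fin (n - r - 1)) ℝ)
    (hΨsym : Ψ.IsSymm) (hΨ : IsUnit Ψ.det)
    (S : Matrix (Fin n) (Fin n) ℝ) (hSZ : S = Z * Ψ * Zᵀ)
    (hS : IsStressMatrix G p S) :
    Z * Ψ * (Z.submatrix (vertOf n r) id)ᵀ = S.submatrix id (vertOf n r) ∧
    IsGaleMatrix p (Z * Ψ * (Z.submatrix (vertOf n r) id)ᵀ) := by
  obtain ⟨hZli, hZker, hZspan⟩ := hZ
  -- Z has injective mulVec
  have hZinj : ∀ v : Fin (n - r - 1) → ℝ, Z *ᵥ v = 0 → v = 0 := by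
    intro v hv
    have := Fintype.linearIndependent_iff.mp hZli v (by rw [sum_smul_col]; exact hv)
    funext j; exact this j
  -- calA p * Z = 0
  have hAZ : calA p * Z = 0 := by
    ext i j
    have := congrFun (hZker j) i
    simpa [Matrix.mul_apply, Matrix.mulVec, dotProduct] using this
  -- Z₂ := Z.submatrix (vertOf n r) id is nonsingular
  set Z₂ : Matrix (Fin (n - r - 1)) (Fin (n - r - 1)) ℝ := Z.submatrix (vertOf n r) id
    with hZ₂
  have hZ₂det : Z₂.det ≠ 0 := by
    intro hdet
    obtain ⟨v, hv0, hv⟩ := (Matrix.exists_mulVec_eq_zero_iff).mpr hdet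
    have hxsup : ∀ j, (Z *ᵥ v) (vertOf n r j) = 0 := by
      intro j
      have := congrFun hv j
      simpa [hZ₂, Matrix.mulVec, dotProduct, Matrix.submatrix] using this
    have hxA : calA p *ᵥ (Z *ᵥ v) = 0 := by
      rw [Matrix.mulVec_mulVec, hAZ, Matrix.zero_mulVec]
    have := key_vanish hn p hgen (Z *ᵥ v) hxA hxsup
    exact hv0 (hZinj v this)
  -- W := Ψ * Z₂ᵀ is nonsingular
  set W : Matrix (Fin (n - r - 1)) (Fin (n - r - 1)) ℝ := Ψ * Z₂ᵀ with hW
  have hWdet : IsUnit W.det := by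
    rw [hW, Matrix.det_mul, Matrix.det_transpose]
    exact (isUnit_iff_ne_zero.mpr (by
      intro h
      rcases mul_eq_zero.mp h with h | h
      · exact (isUnit_iff_ne_zero.mp hΨ) h
      · exact hZ₂det h))
  have hhatZ : Z * Ψ * Z₂ᵀ = Z * W := by rw [hW, Matrix.mul_assoc]
  constructor
  · -- equality of matrices
    subst hSZ
    ext i j
    simp only [Matrix.mul_apply, Matrix.submatrix_apply, Matrix.transpose_apply, id]
    rfl
  · refine ⟨?_, ?_, ?_⟩
    · -- linear independence of columns
      rw [Fintype.linearIndependent_iff]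
      intro g hg j
      rw [sum_smul_col] at hg
      have : (Z * Ψ * Z₂ᵀ) *ᵥ g = Z *ᵥ (W *ᵥ g) := by
        rw [hhatZ, ← Matrix.mulVec_mulVec]
      rw [this] at hg
      have h1 : W *ᵥ g = 0 := hZinj _ hg
      have h2 : g = 0 := by
        by_contra hne
        exact (isUnit_iff_ne_zero.mp hWdet)
          ((Matrix.exists_mulVec_eq_zero_iff).mp ⟨g, hne, h1⟩)
      rw [h2]; rfl
    · -- columns in kernel of calA
      intro j
      have hAhat : calA p * (Z * Ψ * Z₂ᵀ) = 0 := by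
        rw [hhatZ, ← Matrix.mul_assoc, hAZ, Matrix.zero_mul]
      funext i
      have := congrFun (congrFun hAhat i) j
      simpa [Matrix.mul_apply, Matrix.mulVec, dotProduct] using this
    · -- spanning
      intro x hx
      obtain ⟨c, hc⟩ := hZspan x hx
      refine ⟨W⁻¹ *ᵥ c, ?_⟩
      rw [sum_smul_col, hhatZ, Matrix.mulVec_mulVec, Matrix.mul_assoc,
        Matrix.mul_nonsing_inv W hWdet, Matrix.mul_one, hc, sum_smul_col]
end
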